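/- arXiv:2011.08635 — 5 statements merged into one kernel-verified Lean document; each statement's English description precedes it below -/
import Mathlib

section
/- If G is a finite simple graph and v ∈ V(G), then γ*_{rk}(G) − min{Δ(G)+1, k} ≤ γ*_{rk}(G − v) ≤ γ*_{rk}(G), where Δ(G) is the maximum degree of G and G − v is the graph obtained by deleting v and its incident edges. -/
/-! The middle graph of `G - v` embeds in that of `G`, missing exactly `v` and the edges at `v`.
A rainbow dominating function on `M(G)` collapses onto `M(G - v)`, without increasing the weight,
by moving the label of each edge `wv` onto the vertex `w`. Conversely, one on `M(G - v)` extends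
to `M(G)` by giving `v` all `k` colours, or, when `Δ + 1 ≤ k`, by giving `v` and each of its at
most `Δ` edges one common colour; this costs `min (Δ + 1) k`. -/

open SimpleGraph Finset

/-- A `k`-rainbow dominating function on a graph `H`. -/
def IsRDF {W : Type*} (H : SimpleGraph W) (k : ℕ) (f : W → Finset (Fin k)) : Prop :=
  ∀ w, f w = ∅ → ∀ c : Fin k, ∃ u, H.Adj w u ∧ c ∈ f u

/-- The weight of a rainbow dominating function. -/
noncomputable def rdfWeight {W : Type*} [Fintype W] {k : ℕ} (f : W → Finset (Fin k)) : ℕ :=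
  ∑ w, (f w).card

/-- The `k`-rainbow domination number of a graph. -/
noncomputable def rdn {W : Type*} [Fintype W] (H : SimpleGraph W) (k : ℕ) : ℕ :=
  sInf {n | ∃ f : W → Finset (Fin k), IsRDF H k f ∧ rdfWeight f = n}

/-- The middle graph of `G`, on vertex set `V(G) ⊕ E(G)`. -/
def middleGraph {V : Type*} (G : SimpleGraph V) : SimpleGraph (V ⊕ G.edgeSet) where
  Adj x y :=
    match x, y with
    | Sum.inl _, Sum.inl _ => False
    | Sum.inl v, Sum.inr e => v ∈ (e : Sym2 V)
    | Sum.inr e, Sum.inl v => v ∈ (e : Sym2 V)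
    | Sum.inr e, Sum.inr f => e ≠ f ∧ ∃ v, v ∈ (e : Sym2 V) ∧ v ∈ (f : Sym2 V)
  symm := by
    constructor
    rintro (v | e) (w | f) h
    · exact h.elim
    · exact h
    · exact h
    · exact ⟨Ne.symm h.1, h.2.imp fun v hv => ⟨hv.2, hv.1⟩⟩
  loopless := by
    constructor
    rintro (v | e) h
    · exact h.elim
    · exact h.1 rfl

/-- The middle `k`-rainbow domination number `γ*_{rk}(G)`. -/
noncomputable def mrdn {V : Type*} [Fintype V] (G : SimpleGraph V) (k : ℕ) : ℕ :=
  letI := Classical.decEq V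
  letI : DecidableRel G.Adj := fun _ _ => Classical.dec _
  rdn (middleGraph G) k

/-- The `k`-rainbow domatic number: the maximum size of a family of `k`-rainbow
dominating functions with `∑ i |f i v| ≤ k` for each vertex `v`. -/
noncomputable def rdomatic {W : Type*} (H : SimpleGraph W) (k : ℕ) : ℕ :=
  sSup {d | ∃ F : Fin d → W → Finset (Fin k), Function.Injective F ∧
    (∀ i, IsRDF H k (F i)) ∧ ∀ w, (∑ i, (F i w).card) ≤ k}

/-- The matching number `α'(G)`. -/
noncomputable def matchingNumber {V : Type*} [Fintype V] (G : SimpleGraph V) : ℕ :=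
  sSup {n | ∃ M : Finset (Sym2 V), ↑M ⊆ G.edgeSet ∧
    (∀ e ∈ M, ∀ f ∈ M, e ≠ f → ∀ v : V, ¬(v ∈ e ∧ v ∈ f)) ∧ M.card = n}

section RainbowDomination

variable {W W' : Type*} [Fintype W] [Fintype W'] {H : SimpleGraph W} {H' : SimpleGraph W'}
  {k : ℕ}

lemma rdn_le_rdfWeight {f : W → Finset (Fin k)} (hf : IsRDF H k f) : rdn H k ≤ rdfWeight f :=
  Nat.sInf_le ⟨f, hf, rfl⟩

lemma exists_isRDF_rdfWeight_eq_rdn (H : SimpleGraph W) (k : ℕ) :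
    ∃ f : W → Finset (Fin k), IsRDF H k f ∧ rdfWeight f = rdn H k :=
  Nat.sInf_mem (s := {n | ∃ f : W → Finset (Fin k), IsRDF H k f ∧ rdfWeight f = n})
    ⟨_, fun _ => univ, fun _ h c => absurd (h ▸ mem_univ c) (notMem_empty c), rfl⟩

lemma rdn_le_rdn_of_collapse (R : W → W' → Prop) (ι : W' → W)
    (hR : ∀ x y z, R x y → R x z → y = z) (hι : ∀ y, R (ι y) y)
    (hadj : ∀ y u, H.Adj (ι y) u → ∃ z, R u z ∧ (z = y ∨ H'.Adj y z)) :
    rdn H' k ≤ rdn H k := by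
  classical
  obtain ⟨f, hf, hfw⟩ := exists_isRDF_rdfWeight_eq_rdn H k
  set g : W' → Finset (Fin k) := fun y => ({x | R x y} : Finset W).biUnion f
  have hg : IsRDF H' k g := by
    intro y hy c
    have hfy : ∀ x, R x y → f x = ∅ := fun x hx =>
      subset_empty.mp (hy ▸ subset_biUnion_of_mem f (mem_filter.mpr ⟨mem_univ x, hx⟩))
    obtain ⟨u, hyu, hcu⟩ := hf (ι y) (hfy _ (hι y)) c
    obtain ⟨z, huz, rfl | hyz⟩ := hadj y u hyu
    · exact absurd (hfy u huz ▸ hcu) (notMem_empty c)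
    · exact ⟨z, hyz, mem_biUnion.mpr ⟨u, mem_filter.mpr ⟨mem_univ u, huz⟩, hcu⟩⟩
  have hfiber : ∀ x, #{y | R x y} ≤ 1 := fun x =>
    card_le_one.mpr fun y hy z hz => hR x y z (mem_filter.mp hy).2 (mem_filter.mp hz).2
  calc rdn H' k ≤ rdfWeight g := rdn_le_rdfWeight hg
    _ ≤ ∑ y, ∑ x with R x y, #(f x) := sum_le_sum fun y _ => card_biUnion_le
    _ = ∑ x, ∑ y with R x y, #(f x) := by simp only [sum_filter]; exact sum_comm
    _ ≤ ∑ x, #(f x) := sum_le_sum fun x _ => by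
      rw [sum_const, smul_eq_mul]; exact mul_le_of_le_one_left' (hfiber x)
    _ = rdn H k := hfw

lemma rdn_le_rdn_add_of_embedding (ι : H' ↪g H) (a : W → Finset (Fin k))
    (ha : ∀ x ∉ Set.range ι, a x = ∅ → ∀ c, ∃ u ∉ Set.range ι, H.Adj x u ∧ c ∈ a u) :
    rdn H k ≤ rdn H' k + ∑ x, #(a x) := by
  classical
  obtain ⟨g, hg, hgw⟩ := exists_isRDF_rdfWeight_eq_rdn H' k
  set f := Function.extend ι g a
  have hf_range (y : W') : f (ι y) = g y := ι.injective.extend_apply g a y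
  have hf_compl (x : W) (hx : x ∉ Set.range ι) : f x = a x := Function.extend_apply' g a x hx
  have hf : IsRDF H k f := by
    intro x hx c
    by_cases hxι : x ∈ Set.range ι
    · obtain ⟨y, rfl⟩ := hxι
      obtain ⟨z, hyz, hcz⟩ := hg y (hf_range y ▸ hx) c
      exact ⟨ι z, ι.map_adj_iff.mpr hyz, hf_range z ▸ hcz⟩
    · obtain ⟨u, hu, hxu, hcu⟩ := ha x hxι (hf_compl x hxι ▸ hx) c
      exact ⟨u, hxu, hf_compl u hu ▸ hcu⟩
  set S := univ.map ι.toEmbedding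
  have hS (x : W) : x ∈ S ↔ x ∈ Set.range ι := by simp [S]
  calc rdn H k ≤ rdfWeight f := rdn_le_rdfWeight hf
    _ = ∑ x ∈ S, #(f x) + ∑ x ∈ Sᶜ, #(f x) := (sum_add_sum_compl S _).symm
    _ = rdfWeight g + ∑ x ∈ Sᶜ, #(a x) := by
      rw [sum_map]
      congr 1
      · exact sum_congr rfl fun y _ => congrArg card (hf_range y)
      · exact sum_congr rfl fun x hx =>
          congrArg card (hf_compl x fun h => (mem_compl.mp hx) ((hS x).mpr h))
    _ ≤ rdn H' k + ∑ x, #(a x) := by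
      rw [hgw]; exact Nat.add_le_add_left (sum_le_sum_of_subset (subset_univ _)) _

end RainbowDomination

section MiddleGraph

variable {V V' : Type*} {G : SimpleGraph V} {G' : SimpleGraph V'}

lemma Function.Injective.mem_sym2_map_iff {f : V' → V} (hf : Function.Injective f) {a : V'}
    {z : Sym2 V'} : f a ∈ z.map f ↔ a ∈ z := by
  refine ⟨fun h => ?_, fun h => Sym2.mem_map.mpr ⟨a, h, rfl⟩⟩
  obtain ⟨b, hb, hba⟩ := Sym2.mem_map.mp h
  exact hf hba ▸ hb

def middleGraphEmbedding (φ : G' ↪g G) : middleGraph G' ↪g middleGraph G where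
  toFun := Sum.map φ φ.mapEdgeSet
  inj' := Sum.map_injective.mpr ⟨φ.injective, φ.mapEdgeSet.injective⟩
  map_rel_iff' := by
    have hmem {a : V'} {z : Sym2 V'} := φ.injective.mem_sym2_map_iff (a := a) (z := z)
    rintro (u | e) (w | f)
    · exact Iff.rfl
    · exact hmem
    · exact hmem
    · refine and_congr φ.mapEdgeSet.injective.ne_iff ⟨?_, ?_⟩
      · rintro ⟨x, hxe, hxf⟩
        obtain ⟨a, hae, rfl⟩ := Sym2.mem_map.mp hxe
        exact ⟨a, hae, hmem.mp hxf⟩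
      · rintro ⟨a, hae, haf⟩
        exact ⟨φ a, hmem.mpr hae, hmem.mpr haf⟩

end MiddleGraph

lemma mrdn_eq_rdn {V : Type*} [Fintype V] (G : SimpleGraph V) (k : ℕ)
    [Fintype (V ⊕ G.edgeSet)] :
    mrdn G k = rdn (middleGraph G) k := by
  unfold mrdn
  congr!

lemma card_edgeSet_filter_mem_eq_degree {V : Type*} [Fintype V] [DecidableEq V]
    (G : SimpleGraph V) [DecidableRel G.Adj] [Fintype G.edgeSet] (v : V) :
    #{e : G.edgeSet | v ∈ (e : Sym2 V)} = G.degree v := by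
  rw [← card_incidenceSet_eq_degree, ← Fintype.card_subtype]
  exact Fintype.card_congr (Equiv.subtypeSubtypeEquivSubtypeInter (· ∈ G.edgeSet) (v ∈ ·))


section DeleteVertex

variable {V : Type*} (G : SimpleGraph V) (v : V)

abbrev deleteVertex : SimpleGraph {w : V // w ≠ v} := G.comap Subtype.val

def deleteVertexEmbedding : deleteVertex G v ↪g G :=
  Embedding.comap (Function.Embedding.subtype _) G

variable {G v} in
lemma inl_mem_range_middleGraphEmbedding_iff {u : V} :
    Sum.inl u ∈ Set.range (middleGraphEmbedding (deleteVertexEmbedding G v)) ↔ u ≠ v := by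
  refine ⟨?_, fun hu => ⟨Sum.inl ⟨u, hu⟩, rfl⟩⟩
  rintro ⟨w | e, h⟩
  · exact Sum.inl_injective h ▸ w.2
  · exact Sum.inr_ne_inl h |>.elim

variable {G v} in
lemma inr_mem_range_middleGraphEmbedding_iff {e : G.edgeSet} :
    Sum.inr e ∈ Set.range (middleGraphEmbedding (deleteVertexEmbedding G v)) ↔
      v ∉ (e : Sym2 V) := by
  constructor
  · rintro ⟨w | e', h⟩
    · exact Sum.inl_ne_inr h |>.elim
    · obtain rfl := Sum.inr_injective h
      intro hv
      obtain ⟨a, -, ha⟩ := Sym2.mem_map.mp hv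
      exact a.2 ha
  · obtain ⟨e, he⟩ := e
    induction e using Sym2.ind with
    | _ a b =>
      intro hv
      have ha : a ≠ v := fun h => hv (h ▸ Sym2.mem_mk_left a b)
      have hb : b ≠ v := fun h => hv (h ▸ Sym2.mem_mk_right a b)
      exact ⟨Sum.inr ⟨s(⟨a, ha⟩, ⟨b, hb⟩), he⟩, rfl⟩

variable [Fintype V] [DecidableEq V]

lemma mrdn_deleteVertex_le (k : ℕ) : mrdn (deleteVertex G v) k ≤ mrdn G k := by
  classical
  set ι := middleGraphEmbedding (deleteVertexEmbedding G v)
  -- the edge `wv` of `G` is collapsed onto the vertex `w` of `G - v`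
  let R (x : V ⊕ G.edgeSet) (y : {w : V // w ≠ v} ⊕ (deleteVertex G v).edgeSet) : Prop :=
    x = ι y ∨ ∃ w e, y = Sum.inl w ∧ x = Sum.inr e ∧ (e : Sym2 V) = s(↑w, v)
  rw [mrdn_eq_rdn, mrdn_eq_rdn]
  refine rdn_le_rdn_of_collapse R ι ?_ (fun y => Or.inl rfl) ?_
  · rintro x y z (rfl | ⟨w, e, rfl, rfl, he⟩) (hz | ⟨w', e', rfl, hx, he'⟩)
    · exact ι.injective hz
    · exact (inr_mem_range_middleGraphEmbedding_iff.mp (hx ▸ Set.mem_range_self y)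
        (he' ▸ Sym2.mem_mk_right _ _)).elim
    · exact (inr_mem_range_middleGraphEmbedding_iff.mp (hz ▸ Set.mem_range_self z)
        (he ▸ Sym2.mem_mk_right _ _)).elim
    · obtain rfl := Sum.inr_injective hx
      exact congrArg Sum.inl (Subtype.ext (Sym2.congr_left.mp (he.symm.trans he')))
  · intro y u hyu
    by_cases hu : u ∈ Set.range ι
    · obtain ⟨z, rfl⟩ := hu
      exact ⟨z, Or.inl rfl, Or.inr (ι.map_adj_iff.mp hyu)⟩
    rcases u with u | e
    · obtain rfl : u = v := not_not.mp (inl_mem_range_middleGraphEmbedding_iff.not.mp hu)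
      rcases y with w | e'
      · exact hyu.elim
      · exact (inr_mem_range_middleGraphEmbedding_iff.mp
          (Set.mem_range_self (Sum.inr e')) hyu).elim
    · have hv : v ∈ (e : Sym2 V) := not_not.mp (inr_mem_range_middleGraphEmbedding_iff.not.mp hu)
      rcases y with w | e'
      · refine ⟨Sum.inl w, Or.inr ⟨w, e, rfl, rfl, ?_⟩, Or.inl rfl⟩
        exact (Sym2.mem_and_mem_iff w.2).mp ⟨hyu, hv⟩
      · obtain ⟨-, x, hxe', hxe⟩ := hyu
        obtain ⟨a, hae', rfl⟩ := Sym2.mem_map.mp hxe'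
        refine ⟨Sum.inl a, Or.inr ⟨a, e, rfl, rfl, ?_⟩, Or.inr hae'⟩
        exact (Sym2.mem_and_mem_iff a.2).mp ⟨hxe, hv⟩

lemma mrdn_le_mrdn_deleteVertex_add [DecidableRel G.Adj] {k : ℕ} {A B : Finset (Fin k)}
    (hA : A = ∅ → IsEmpty (Fin k)) (hB : B = ∅ → A = univ) :
    mrdn G k ≤ mrdn (deleteVertex G v) k + (#A + #B * G.degree v) := by
  classical
  let a : V ⊕ G.edgeSet → Finset (Fin k) :=
    Sum.elim (fun u => if u = v then A else ∅) (fun e => if v ∈ (e : Sym2 V) then B else ∅)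
  have ha : ∑ x, #(a x) = #A + #B * G.degree v := by
    rw [Fintype.sum_sum_type, ← card_edgeSet_filter_mem_eq_degree]
    simp [a, apply_ite, sum_ite, mul_comm]
  rw [mrdn_eq_rdn, mrdn_eq_rdn, ← ha]
  refine rdn_le_rdn_add_of_embedding (middleGraphEmbedding (deleteVertexEmbedding G v)) a ?_
  rintro (u | e) hx hax c
  · obtain rfl : u = v := not_not.mp (inl_mem_range_middleGraphEmbedding_iff.not.mp hx)
    exact (hA (by simpa [a] using hax)).elim c
  · have hv : v ∈ (e : Sym2 V) := not_not.mp (inr_mem_range_middleGraphEmbedding_iff.not.mp hx)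
    refine ⟨Sum.inl v, inl_mem_range_middleGraphEmbedding_iff.not.mpr (not_not.mpr rfl), hv, ?_⟩
    simp [a, hB (by simpa [a, hv] using hax)]

end DeleteVertex

/-- `γ*_{rk}(G) − min{Δ(G)+1, k} ≤ γ*_{rk}(G − v) ≤ γ*_{rk}(G)`. -/
theorem stmt2 {V : Type*} [Fintype V] [DecidableEq V] (G : SimpleGraph V)
    [DecidableRel G.Adj] (k : ℕ) (v : V) :
    mrdn G k - min (G.maxDegree + 1) k ≤ mrdn (G.comap (Subtype.val : {w : V // w ≠ v} → V)) k ∧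
    mrdn (G.comap (Subtype.val : {w : V // w ≠ v} → V)) k ≤ mrdn G k := by
  refine ⟨tsub_le_iff_right.mpr ?_, mrdn_deleteVertex_le G v k⟩
  change mrdn G k ≤ mrdn (deleteVertex G v) k + _
  rcases le_total (G.maxDegree + 1) k with h | h
  · rw [min_eq_left h]
    let c : Fin k := ⟨0, by omega⟩
    calc mrdn G k ≤ mrdn (deleteVertex G v) k + (#{c} + #{c} * G.degree v) :=
          mrdn_le_mrdn_deleteVertex_add G v (by simp) (by simp)
      _ ≤ mrdn (deleteVertex G v) k + (G.maxDegree + 1) := by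
          simpa [add_comm] using G.degree_le_maxDegree v
  · rw [min_eq_right h]
    simpa using mrdn_le_mrdn_deleteVertex_add G v (A := univ) (B := ∅) univ_eq_empty_iff.mp
      fun _ => rfl
end

section
/- For the path P_n on n ≥ 2 vertices, the middle 3-rainbow domination number is γ*_{r3}(P_n) = (4n−1)/3 if n ≡ 1 (mod 3), (4n+1)/3 if n ≡ 2 (mod 3), and 4n/3 if n ≡ 0 (mod 3). -/
open SimpleGraph Finset

/-!
All three cases say `γ*_{r3}(Pₙ) = ⌊(4n + 1)/3⌋`. Write `vᵢ` for the vertices of `Pₙ` and `eᵢ`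
for the edge `vᵢvᵢ₊₁`, so that `M(Pₙ)` is the path `v₀ e₀ v₁ e₁ ⋯` together with the adjacencies
`eᵢ ~ eᵢ₊₁`. Labelling `vᵢ` by `{0}` when `i ≡ 0` and `eᵢ` by `{0,1,2}` when `i ≡ 1 (mod 3)`, plus
`{0}` on the last vertex and the last edge when `n ≡ 2 (mod 3)`, gives a 3-rainbow dominating
function of weight `⌊(4n + 1)/3⌋`. For the lower bound, sweep `M(Pₙ)` from left to right: the
local domination conditions show that each vertex together with the edge to its left costs `4/3`
on average, up to a correction `sweepSlack` that only depends on the weights next to the sweep line.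
-/

section RainbowDomination

variable {W : Type*} {H : SimpleGraph W} {k : ℕ} {f : W → Finset (Fin k)}

lemma IsRDF.le_card_of_forall_adj_subset (hf : IsRDF H k f) {w : W} (hw : f w = ∅)
    {s : Finset (Fin k)} (hs : ∀ u, H.Adj w u → f u ⊆ s) : k ≤ #s := by
  have : s = univ := eq_univ_of_forall fun c =>
    let ⟨u, hu, hc⟩ := hf w hw c
    hs u hu hc
  simp [this]

lemma isRDF_of_forall_exists_adj_eq_univ (h : ∀ w, f w = ∅ → ∃ u, H.Adj w u ∧ f u = univ) :
    IsRDF H k f := fun w hw c =>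
  let ⟨u, hu, hfu⟩ := h w hw
  ⟨u, hu, hfu ▸ mem_univ c⟩

lemma rdn_eq_rdfWeight_of_forall_le [Fintype W] (hf : IsRDF H k f)
    (hle : ∀ g, IsRDF H k g → rdfWeight f ≤ rdfWeight g) : rdn H k = rdfWeight f :=
  le_antisymm (Nat.sInf_le ⟨f, hf, rfl⟩) <|
    le_csInf ⟨_, f, hf, rfl⟩ fun _ ⟨g, hg, hgw⟩ => hgw ▸ hle g hg

end RainbowDomination

section MiddleGraph

variable {V : Type*} {G : SimpleGraph V}

@[simp]
lemma middleGraph_adj_inl_inr {v : V} {e : G.edgeSet} :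
    (middleGraph G).Adj (.inl v) (.inr e) ↔ v ∈ (e : Sym2 V) :=
  Iff.rfl

@[simp]
lemma middleGraph_adj_inr_inl {v : V} {e : G.edgeSet} :
    (middleGraph G).Adj (.inr e) (.inl v) ↔ v ∈ (e : Sym2 V) :=
  Iff.rfl

lemma middleGraph_adj_inr_inr {e e' : G.edgeSet} :
    (middleGraph G).Adj (.inr e) (.inr e') ↔ e ≠ e' ∧ ∃ v, v ∈ (e : Sym2 V) ∧ v ∈ (e' : Sym2 V) :=
  Iff.rfl

end MiddleGraph

/-- If `(l, a, r)` are the weights of `e_{i-1}`, `vᵢ` and `eᵢ`, then three times the weight of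
everything left of `e_{i-1}` is at least `4 i + sweepSlack l a r`. -/
def sweepSlack (l a r : ℕ) : ℤ :=
  if 3 ≤ l then -5 else if l = 2 then -3 else if l = 1 then -2 else if a = 1 ∧ r = 0 then 0 else -1

lemma sweepSlack_nonpos (l a r : ℕ) : sweepSlack l a r ≤ 0 := by
  unfold sweepSlack; split_ifs <;> omega

lemma sweepSlack_step {l a r a' r' : ℕ} (hv : 1 ≤ a ∨ 3 ≤ l + r) (hv' : 1 ≤ a' ∨ 3 ≤ r + r')
    (he : 1 ≤ r ∨ 3 ≤ l + a + a' + r') :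
    sweepSlack r a' r' + 4 ≤ 3 * (l + a) + sweepSlack l a r := by
  unfold sweepSlack; split_ifs <;> omega

lemma sweepSlack_last {l a : ℕ} (hv : 1 ≤ a ∨ 3 ≤ l) : 3 ≤ 3 * (l + a) + sweepSlack l a 0 := by
  unfold sweepSlack; split_ifs <;> omega

/-- The hypotheses are the domination conditions of `M(Pₙ)`, written with `a i = |f vᵢ|` and
`b i = |f e_{i-1}|`. -/
theorem four_mul_le_three_mul_sum_add_one {n : ℕ} {a b : ℕ → ℕ} (hbn : b n = 0)
    (hvert : ∀ i < n, 1 ≤ a i ∨ 3 ≤ b i + b (i + 1))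
    (hedge : ∀ i, i + 1 < n → 1 ≤ b (i + 1) ∨ 3 ≤ b i + a i + a (i + 1) + b (i + 2)) :
    4 * n ≤ 3 * ∑ i ∈ range n, (a i + b i) + 1 := by
  have invariant : ∀ i < n,
      4 * (i : ℤ) + sweepSlack (b i) (a i) (b (i + 1)) ≤ 3 * ∑ j ∈ range i, ((a j : ℤ) + b j) := by
    intro i
    induction i with
    | zero => intro _; simpa using sweepSlack_nonpos (b 0) (a 0) (b 1)
    | succ i ih =>
      intro hi
      have := sweepSlack_step (hvert i (by omega)) (hvert (i + 1) hi) (hedge i hi)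
      rw [sum_range_succ]
      push_cast
      linarith [ih (by omega)]
  rcases n with _ | m
  · simp
  have hlast := sweepSlack_last (l := b m) (a := a m) (by simpa [hbn] using hvert m (by omega))
  have := invariant m (by omega)
  rw [hbn] at this
  zify
  rw [sum_range_succ]
  linarith

lemma sum_range_mod_three_pattern (N : ℕ) :
    ∑ i ∈ range N, ((if i % 3 = 0 then 1 else 0) + (if i % 3 = 2 then 3 else 0)) +
      (if N % 3 = 2 then 2 else 0) = (4 * N + 1) / 3 := by
  induction N with
  | zero => simp
  | succ N ih =>
    rw [sum_range_succ]
    split_ifs at ih ⊢ <;> omega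

namespace SimpleGraph.pathGraph

variable {m : ℕ}

def edge (k : Fin m) : (pathGraph (m + 1)).edgeSet :=
  ⟨s(k.castSucc, k.succ), by simp [pathGraph_adj]⟩

lemma mem_edge {k : Fin m} {v : Fin (m + 1)} :
    v ∈ (edge k : Sym2 (Fin (m + 1))) ↔ (v : ℕ) = k ∨ (v : ℕ) = k + 1 := by
  simp [edge, Fin.ext_iff]

lemma edge_bijective : Function.Bijective (edge (m := m)) := by
  constructor
  · intro j k h
    have := congrArg Subtype.val h
    simp only [edge, Sym2.eq_iff, Fin.ext_iff, Fin.val_castSucc, Fin.val_succ] at this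
    ext; omega
  · rintro ⟨e, he⟩
    induction e using Sym2.ind with
    | _ u v =>
      rw [mem_edgeSet, pathGraph_adj] at he
      rcases he with h | h
      · refine ⟨⟨u, by omega⟩, Subtype.ext ?_⟩
        simp [edge, h]
      · refine ⟨⟨v, by omega⟩, Subtype.ext ?_⟩
        simp [edge, h, Sym2.eq_swap]

lemma middleGraph_adj_edge_edge {j k : Fin m} :
    (middleGraph (pathGraph (m + 1))).Adj (.inr (edge j)) (.inr (edge k)) ↔
      (j : ℕ) + 1 = k ∨ (k : ℕ) + 1 = j := by
  simp only [middleGraph_adj_inr_inr, mem_edge, edge_bijective.1.ne_iff, ne_eq, Fin.ext_iff]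
  constructor
  · rintro ⟨hne, v, hj, hk⟩
    omega
  · rintro (h | h)
    · exact ⟨by omega, k.castSucc, by simp [h]⟩
    · exact ⟨by omega, j.castSucc, by simp [h]⟩

section Labels

variable {α : Type*}

def vertexLabel (f : Fin (m + 1) ⊕ (pathGraph (m + 1)).edgeSet → Finset α) (i : ℕ) : Finset α :=
  if h : i < m + 1 then f (.inl ⟨i, h⟩) else ∅

/-- `leftEdgeLabel f i` is the label of the edge `{i - 1, i}`, and `∅` when there is none. -/
def leftEdgeLabel (f : Fin (m + 1) ⊕ (pathGraph (m + 1)).edgeSet → Finset α) : ℕ → Finset α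
  | 0 => ∅
  | k + 1 => if h : k < m then f (.inr (edge ⟨k, h⟩)) else ∅

variable {f : Fin (m + 1) ⊕ (pathGraph (m + 1)).edgeSet → Finset α}

@[simp]
lemma vertexLabel_val (v : Fin (m + 1)) : vertexLabel f v = f (.inl v) := by
  simp [vertexLabel, v.isLt]

@[simp]
lemma leftEdgeLabel_val_add_one (k : Fin m) : leftEdgeLabel f (k + 1) = f (.inr (edge k)) := by
  simp [leftEdgeLabel]

end Labels

lemma rdfWeight_eq_sum_range {n : ℕ} [Fintype (pathGraph (m + 1)).edgeSet]
    (f : Fin (m + 1) ⊕ (pathGraph (m + 1)).edgeSet → Finset (Fin n)) :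
    rdfWeight f = ∑ i ∈ range (m + 1), (#(vertexLabel f i) + #(leftEdgeLabel f i)) := by
  rw [rdfWeight, Fintype.sum_sum_type, ← edge_bijective.sum_comp, sum_add_distrib,
    sum_range_succ' (fun i => #(leftEdgeLabel f i)),
    ← Fin.sum_univ_eq_sum_range (fun i => #(vertexLabel f i)),
    ← Fin.sum_univ_eq_sum_range (fun i => #(leftEdgeLabel f (i + 1)))]
  simp [leftEdgeLabel]

end SimpleGraph.pathGraph

section LowerBound

open SimpleGraph.pathGraph

variable {m : ℕ} {f : Fin (m + 1) ⊕ (pathGraph (m + 1)).edgeSet → Finset (Fin 3)}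

lemma IsRDF.pathGraph_vertex_constraint (hf : IsRDF (middleGraph (pathGraph (m + 1))) 3 f)
    {i : ℕ} (hi : i < m + 1) :
    1 ≤ #(vertexLabel f i) ∨ 3 ≤ #(leftEdgeLabel f i) + #(leftEdgeLabel f (i + 1)) := by
  refine or_iff_not_imp_left.2 fun h => ?_
  have hempty : f (.inl ⟨i, hi⟩) = ∅ := by simpa [vertexLabel, hi] using h
  refine (hf.le_card_of_forall_adj_subset hempty ?_).trans (card_union_le _ _)
  rintro (v | e) hadj
  · exact hadj.elim
  obtain ⟨k, rfl⟩ := edge_bijective.2 e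
  rw [middleGraph_adj_inl_inr, mem_edge] at hadj
  rw [← leftEdgeLabel_val_add_one (f := f)]
  rcases hadj with h | h <;> simp only at h <;> subst h
  · exact subset_union_right
  · exact subset_union_left

lemma IsRDF.pathGraph_edge_constraint (hf : IsRDF (middleGraph (pathGraph (m + 1))) 3 f)
    {i : ℕ} (hi : i < m) :
    1 ≤ #(leftEdgeLabel f (i + 1)) ∨ 3 ≤ #(leftEdgeLabel f i) + #(vertexLabel f i) +
      #(vertexLabel f (i + 1)) + #(leftEdgeLabel f (i + 2)) := by
  refine or_iff_not_imp_left.2 fun h => ?_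
  have hempty : f (.inr (edge ⟨i, hi⟩)) = ∅ := by simpa [leftEdgeLabel, hi] using h
  have hcard := hf.le_card_of_forall_adj_subset hempty (s := leftEdgeLabel f i ∪
    vertexLabel f i ∪ vertexLabel f (i + 1) ∪ leftEdgeLabel f (i + 2)) ?_
  · have := card_union_le (leftEdgeLabel f i ∪ vertexLabel f i ∪ vertexLabel f (i + 1))
      (leftEdgeLabel f (i + 2))
    have := card_union_le (leftEdgeLabel f i ∪ vertexLabel f i) (vertexLabel f (i + 1))
    have := card_union_le (leftEdgeLabel f i) (vertexLabel f i)
    omega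
  rintro (v | e) hadj
  · rw [middleGraph_adj_inr_inl, mem_edge] at hadj
    rw [← vertexLabel_val (f := f)]
    rcases hadj with h | h <;> rw [h] <;> intro c hc <;> simp [hc]
  · obtain ⟨k, rfl⟩ := edge_bijective.2 e
    rw [middleGraph_adj_edge_edge] at hadj
    rw [← leftEdgeLabel_val_add_one (f := f)]
    rcases hadj with h | h <;> simp only at h
    · rw [show (k : ℕ) + 1 = i + 2 by omega]
      intro c hc
      simp [hc]
    · rw [h]
      intro c hc
      simp [hc]

theorem IsRDF.pathGraph_four_mul_le [Fintype (pathGraph (m + 1)).edgeSet]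
    (hf : IsRDF (middleGraph (pathGraph (m + 1))) 3 f) : 4 * (m + 1) ≤ 3 * rdfWeight f + 1 := by
  rw [rdfWeight_eq_sum_range]
  exact four_mul_le_three_mul_sum_add_one (by simp [leftEdgeLabel])
    (fun i hi => hf.pathGraph_vertex_constraint hi)
    (fun i hi => hf.pathGraph_edge_constraint (by omega))

end LowerBound

namespace SimpleGraph.pathGraph

variable {m : ℕ}

noncomputable def edgeEquiv (m : ℕ) : Fin m ≃ (pathGraph (m + 1)).edgeSet :=
  .ofBijective edge edge_bijective

def vertexPattern (m i : ℕ) : Finset (Fin 3) :=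
  if i % 3 = 0 ∨ (i = m ∧ m % 3 = 1) then {0} else ∅

def leftEdgePattern (m i : ℕ) : Finset (Fin 3) :=
  if i % 3 = 2 then univ else if i = m ∧ m % 3 = 1 then {0} else ∅

noncomputable def optimalRDF (m : ℕ) : Fin (m + 1) ⊕ (pathGraph (m + 1)).edgeSet → Finset (Fin 3)
  | .inl v => vertexPattern m v
  | .inr e => leftEdgePattern m ((edgeEquiv m).symm e + 1)

lemma optimalRDF_inr_edge (k : Fin m) :
    optimalRDF m (.inr (edge k)) = leftEdgePattern m (k + 1) := by
  rw [optimalRDF, show edge k = edgeEquiv m k from rfl, Equiv.symm_apply_apply]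

lemma isRDF_optimalRDF (m : ℕ) : IsRDF (middleGraph (pathGraph (m + 1))) 3 (optimalRDF m) := by
  refine isRDF_of_forall_exists_adj_eq_univ ?_
  rintro (v | e) hempty
  · have hv : ¬((v : ℕ) % 3 = 0 ∨ ((v : ℕ) = m ∧ m % 3 = 1)) := by
      simpa [optimalRDF, vertexPattern] using hempty
    have := v.isLt
    by_cases h1 : (v : ℕ) % 3 = 1
    · refine ⟨.inr (edge ⟨v, by omega⟩), by simp [mem_edge], ?_⟩
      rw [optimalRDF_inr_edge, leftEdgePattern, if_pos (by dsimp only; omega)]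
    · refine ⟨.inr (edge ⟨v - 1, by omega⟩), ?_, ?_⟩
      · simp only [middleGraph_adj_inl_inr, mem_edge]
        omega
      rw [optimalRDF_inr_edge, leftEdgePattern, if_pos (by dsimp only; omega)]
  · obtain ⟨k, rfl⟩ := edge_bijective.2 e
    have hk : ¬(((k : ℕ) + 1) % 3 = 2 ∨ ((k : ℕ) + 1 = m ∧ m % 3 = 1)) := by
      rw [optimalRDF_inr_edge, leftEdgePattern] at hempty
      split_ifs at hempty <;> simp_all [univ_eq_empty_iff]
    have := k.isLt
    by_cases h0 : (k : ℕ) % 3 = 0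
    · refine ⟨.inr (edge ⟨k + 1, by omega⟩), middleGraph_adj_edge_edge.2 (.inl rfl), ?_⟩
      rw [optimalRDF_inr_edge, leftEdgePattern, if_pos (by dsimp only; omega)]
    · refine ⟨.inr (edge ⟨k - 1, by omega⟩), middleGraph_adj_edge_edge.2 (.inr ?_), ?_⟩
      · dsimp only
        omega
      rw [optimalRDF_inr_edge, leftEdgePattern, if_pos (by dsimp only; omega)]

lemma card_vertexPattern_add_card_leftEdgePattern (m i : ℕ) :
    #(vertexPattern m i) + #(leftEdgePattern m i) =
      (if i % 3 = 0 then 1 else 0) + (if i % 3 = 2 then 3 else 0) +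
        (if i = m ∧ m % 3 = 1 then 2 else 0) := by
  unfold vertexPattern leftEdgePattern
  split_ifs <;> simp_all

lemma vertexLabel_optimalRDF {i : ℕ} (hi : i < m + 1) :
    vertexLabel (optimalRDF m) i = vertexPattern m i := by
  simp [vertexLabel, hi, optimalRDF]

lemma leftEdgeLabel_optimalRDF {i : ℕ} (hi : i < m + 1) :
    leftEdgeLabel (optimalRDF m) i = leftEdgePattern m i := by
  rcases i with _ | k
  · rw [leftEdgePattern, if_neg (by omega), if_neg (by omega)]
    rfl
  · exact (leftEdgeLabel_val_add_one (k := ⟨k, by omega⟩)).trans (optimalRDF_inr_edge _)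

lemma rdfWeight_optimalRDF (m : ℕ) [Fintype (pathGraph (m + 1)).edgeSet] :
    rdfWeight (optimalRDF m) = (4 * (m + 1) + 1) / 3 := by
  rw [rdfWeight_eq_sum_range, ← sum_range_mod_three_pattern, sum_congr rfl fun i hi => by
    rw [vertexLabel_optimalRDF (mem_range.1 hi), leftEdgeLabel_optimalRDF (mem_range.1 hi),
      card_vertexPattern_add_card_leftEdgePattern]]
  simp only [ite_and, sum_add_distrib, sum_boole, Nat.cast_id, sum_ite_eq', mem_range,
    lt_add_iff_pos_right, Order.lt_one_iff, ↓reduceIte, Nat.add_left_cancel_iff]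
  split_ifs <;> omega

end SimpleGraph.pathGraph

open SimpleGraph.pathGraph in
theorem rdn_middleGraph_pathGraph (m : ℕ) [Fintype (pathGraph (m + 1)).edgeSet] :
    rdn (middleGraph (pathGraph (m + 1))) 3 = (4 * (m + 1) + 1) / 3 := by
  refine (rdn_eq_rdfWeight_of_forall_le (isRDF_optimalRDF m) fun g hg => ?_).trans
    (rdfWeight_optimalRDF m)
  have := hg.pathGraph_four_mul_le
  rw [rdfWeight_optimalRDF]
  omega

/-- middle 3-rainbow domination number of paths. -/
theorem stmt6 (n : ℕ) (hn : 2 ≤ n) :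
    (n % 3 = 1 → mrdn (pathGraph n) 3 = (4 * n - 1) / 3) ∧
    (n % 3 = 2 → mrdn (pathGraph n) 3 = (4 * n + 1) / 3) ∧
    (n % 3 = 0 → mrdn (pathGraph n) 3 = 4 * n / 3) := by
  obtain ⟨m, rfl⟩ : ∃ m, n = m + 1 := ⟨n - 1, by omega⟩
  have h : mrdn (pathGraph (m + 1)) 3 = (4 * (m + 1) + 1) / 3 := by
    classical exact rdn_middleGraph_pathGraph m
  refine ⟨fun _ => ?_, fun _ => ?_, fun _ => ?_⟩ <;> omega
end

section
/- For every tree T of order n, the middle 3-rainbow domination number satisfies γ*_{r3}(T) ≤ n + α'(T), where α'(T) is the matching number of T. -/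
open SimpleGraph Finset

/-!
Take a maximum matching `M`. Give every edge of `M` all three colours, give colour `0` to every
vertex not covered by `M`, and nothing to anything else. In the middle graph a covered vertex is
adjacent to its matching edge, and every edge outside `M` meets an edge of `M` (else `M` could be
enlarged), so this is a rainbow dominating function. Its weight is `(n - 2|M|) + 3|M| = n + α'(T)`.
-/

namespace SimpleGraph

variable {V : Type*} (G : SimpleGraph V)

def IsEdgeMatching (M : Finset (Sym2 V)) : Prop :=
  ↑M ⊆ G.edgeSet ∧ ∀ e ∈ M, ∀ f ∈ M, e ≠ f → ∀ v : V, ¬(v ∈ e ∧ v ∈ f)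

variable {G}

theorem IsEdgeMatching.insert [DecidableEq V] {M : Finset (Sym2 V)} (hM : G.IsEdgeMatching M)
    {e : Sym2 V} (he : e ∈ G.edgeSet) (hdisj : ∀ s ∈ M, ∀ v ∈ s, v ∉ e) :
    G.IsEdgeMatching (insert e M) := by
  refine ⟨by simpa [Set.insert_subset_iff] using ⟨he, hM.1⟩, ?_⟩
  simp only [Finset.mem_insert]
  rintro a (rfl | ha) b (rfl | hb) hab v ⟨hva, hvb⟩
  · exact hab rfl
  · exact hdisj b hb v hvb hva
  · exact hdisj a ha v hva hvb
  · exact hM.2 a ha b hb hab v ⟨hva, hvb⟩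

theorem IsEdgeMatching.card_biUnion_toFinset [DecidableEq V] {M : Finset (Sym2 V)}
    (hM : G.IsEdgeMatching M) : #(M.biUnion Sym2.toFinset) = 2 * #M := by
  rw [card_biUnion, sum_congr rfl fun s hs =>
    Sym2.card_toFinset_of_not_isDiag s (G.not_isDiag_of_mem_edgeSet (hM.1 hs)), sum_const,
    smul_eq_mul, mul_comm]
  intro a ha b hb hab
  simp only [Finset.disjoint_left, Sym2.mem_toFinset]
  exact fun v hva hvb => hM.2 a ha b hb hab v ⟨hva, hvb⟩

section matchingNumber

variable [Fintype V]

theorem matchingNumber_eq_sSup :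
    matchingNumber G = sSup {n | ∃ M : Finset (Sym2 V), G.IsEdgeMatching M ∧ #M = n} := by
  simp only [matchingNumber, IsEdgeMatching, and_assoc]

theorem bddAbove_card_isEdgeMatching :
    BddAbove {n | ∃ M : Finset (Sym2 V), G.IsEdgeMatching M ∧ #M = n} := by
  classical
  refine ⟨Fintype.card (Sym2 V), ?_⟩
  rintro n ⟨M, -, rfl⟩
  exact M.card_le_univ

theorem IsEdgeMatching.card_le_matchingNumber {M : Finset (Sym2 V)}
    (hM : G.IsEdgeMatching M) : #M ≤ matchingNumber G :=
  matchingNumber_eq_sSup (G := G) ▸ le_csSup bddAbove_card_isEdgeMatching ⟨M, hM, rfl⟩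

theorem exists_isEdgeMatching_card_eq_matchingNumber :
    ∃ M : Finset (Sym2 V), G.IsEdgeMatching M ∧ #M = matchingNumber G :=
  matchingNumber_eq_sSup (G := G) ▸ Nat.sSup_mem
    (s := {n | ∃ M : Finset (Sym2 V), G.IsEdgeMatching M ∧ #M = n})
    ⟨0, ∅, ⟨by simp, by simp⟩, rfl⟩ bddAbove_card_isEdgeMatching

theorem IsEdgeMatching.exists_common_vertex_of_card_eq_matchingNumber {M : Finset (Sym2 V)}
    (hM : G.IsEdgeMatching M) (hmax : #M = matchingNumber G)
    {e : Sym2 V} (he : e ∈ G.edgeSet) (heM : e ∉ M) :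
    ∃ s ∈ M, ∃ v ∈ s, v ∈ e := by
  classical
  by_contra! hdisj
  have := (hM.insert he hdisj).card_le_matchingNumber
  rw [card_insert_of_notMem heM, hmax] at this
  omega

end matchingNumber

theorem IsEdgeMatching.two_mul_card_le_card [Fintype V] {M : Finset (Sym2 V)}
    (hM : G.IsEdgeMatching M) : 2 * #M ≤ Fintype.card V := by
  classical
  exact hM.card_biUnion_toFinset ▸ card_le_univ _

variable (G) in
def matchingRDF [DecidableEq V] (k : ℕ) [NeZero k] (M : Finset (Sym2 V)) :
    V ⊕ G.edgeSet → Finset (Fin k)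
  | Sum.inl v => if v ∈ M.biUnion Sym2.toFinset then ∅ else {0}
  | Sum.inr e => if (e : Sym2 V) ∈ M then univ else ∅

theorem isRDF_matchingRDF [DecidableEq V] (k : ℕ) [NeZero k] {M : Finset (Sym2 V)}
    (hM : ↑M ⊆ G.edgeSet) (hmax : ∀ e ∈ G.edgeSet, e ∉ M → ∃ s ∈ M, ∃ v ∈ s, v ∈ e) :
    IsRDF (middleGraph G) k (matchingRDF G k M) := by
  rintro (v | e) hempty c
  · have hv : v ∈ M.biUnion Sym2.toFinset := by
      by_contra hv
      simp [matchingRDF, hv] at hempty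
    obtain ⟨s, hs, hvs⟩ := by simpa only [mem_biUnion, Sym2.mem_toFinset] using hv
    exact ⟨Sum.inr ⟨s, hM hs⟩, hvs, by simp [matchingRDF, hs]⟩
  · have he : (e : Sym2 V) ∉ M := by
      intro he
      simp only [matchingRDF, he, if_true] at hempty
      exact univ_nonempty.ne_empty hempty
    obtain ⟨s, hs, v, hvs, hve⟩ := hmax e e.2 he
    refine ⟨Sum.inr ⟨s, hM hs⟩, ⟨?_, v, hve, hvs⟩, by simp [matchingRDF, hs]⟩
    rintro rfl
    exact he hs

theorem rdfWeight_matchingRDF [Fintype V] [DecidableEq V] [Fintype G.edgeSet] (k : ℕ) [NeZero k]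
    {M : Finset (Sym2 V)} (hM : G.IsEdgeMatching M) :
    rdfWeight (matchingRDF G k M) = Fintype.card V - 2 * #M + k * #M := by
  have hME : M ⊆ G.edgeFinset := by
    rw [← coe_subset, coe_edgeFinset]
    exact hM.1
  rw [rdfWeight, Fintype.sum_sum_type]
  simp only [matchingRDF, apply_ite card, card_empty, card_singleton, card_univ,
    Fintype.card_fin]
  congr 1
  · rw [← hM.card_biUnion_toFinset, ← card_univ, ← card_sdiff_of_subset (subset_univ _)]
    simp only [sdiff_eq_filter, card_eq_sum_ones, sum_filter, ite_not]
  · rw [← sum_subtype G.edgeFinset (fun _ => mem_edgeFinset) (fun s => if s ∈ M then k else 0),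
      sum_ite_mem, inter_eq_right.mpr hME, sum_const, smul_eq_mul, mul_comm]

theorem mrdn_le_rdfWeight [Fintype V] [Fintype G.edgeSet] {k : ℕ}
    {f : V ⊕ G.edgeSet → Finset (Fin k)} (hf : IsRDF (middleGraph G) k f) :
    mrdn G k ≤ rdfWeight f := by
  have := Nat.sInf_le (s := {n | ∃ g : V ⊕ G.edgeSet → Finset (Fin k),
    IsRDF (middleGraph G) k g ∧ rdfWeight g = n}) ⟨f, hf, rfl⟩
  unfold mrdn rdn
  convert this

end SimpleGraph

theorem stmt9_general {V : Type*} [Fintype V] (T : SimpleGraph V) :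
    mrdn T 3 ≤ Fintype.card V + matchingNumber T := by
  classical
  obtain ⟨M, hM, hcard⟩ := T.exists_isEdgeMatching_card_eq_matchingNumber
  have hRDF := isRDF_matchingRDF 3 hM.1 fun e he heM =>
    hM.exists_common_vertex_of_card_eq_matchingNumber hcard he heM
  have hM2 := hM.two_mul_card_le_card
  calc mrdn T 3 ≤ rdfWeight (matchingRDF T 3 M) := mrdn_le_rdfWeight hRDF
    _ = Fintype.card V - 2 * #M + 3 * #M := rdfWeight_matchingRDF 3 hM
    _ = Fintype.card V + matchingNumber T := by omega

/-- For every tree `T` of order `n`, `γ*_{r3}(T) ≤ n + α'(T)`. -/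
theorem stmt9 {V : Type*} [Fintype V] (T : SimpleGraph V) (hT : T.IsTree) :
    mrdn T 3 ≤ Fintype.card V + matchingNumber T :=
  stmt9_general T
end

section
/- Let T be a tree and let u, v, w be vertices of T forming a path uvw with deg_T(v) = 2 and deg_T(w) = 1. Then for any middle 3-rainbow dominating function f on T of minimum weight, |f(uv)| + |f(v)| + |f(vw)| + |f(w)| ≥ 3, where uv and vw are the corresponding edges viewed as vertices of the middle graph. -/
open SimpleGraph Finset

/-
If one of `f(w)`, `f(v)`, `f(vw)` is empty, its neighbourhood in the middle graph must carry all
three colours. Because `w` is a leaf and `v` has exactly the neighbours `u` and `w`, these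
neighbourhoods are `{vw}`, `{uv, vw}` and `{v, w, uv}`, all inside the four elements summed over.
Otherwise `f(v)`, `f(vw)` and `f(w)` are nonempty and already contribute 3.
-/

lemma IsRDF.le_sum_card_of_eq_empty {W : Type*} {H : SimpleGraph W} {k : ℕ}
    {f : W → Finset (Fin k)} (hf : IsRDF H k f) {x : W} (hx : f x = ∅) {S : Finset W}
    (hS : ∀ y, H.Adj x y → y ∈ S) : k ≤ ∑ y ∈ S, (f y).card := by
  classical
  have hcover : (univ : Finset (Fin k)) ⊆ S.biUnion f := fun c _ => by
    obtain ⟨y, hxy, hc⟩ := hf x hx c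
    exact mem_biUnion.mpr ⟨y, hS y hxy, hc⟩
  simpa using (card_le_card hcover).trans card_biUnion_le

namespace SimpleGraph

variable {V : Type*} {G : SimpleGraph V} {u v w : V}

lemma middleGraph_adj_inl {y : V ⊕ G.edgeSet} (h : (middleGraph G).Adj (Sum.inl v) y) :
    ∃ e : G.edgeSet, y = Sum.inr e ∧ v ∈ (e : Sym2 V) := by
  rcases y with x | e
  · exact h.elim
  · exact ⟨e, rfl, h⟩

lemma middleGraph_adj_inr {e : G.edgeSet} {y : V ⊕ G.edgeSet}
    (h : (middleGraph G).Adj (Sum.inr e) y) :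
    (∃ x ∈ (e : Sym2 V), y = Sum.inl x) ∨
      ∃ e' : G.edgeSet, y = Sum.inr e' ∧ e ≠ e' ∧ ∃ x ∈ (e : Sym2 V), x ∈ (e' : Sym2 V) := by
  rcases y with x | e'
  · exact Or.inl ⟨x, h, rfl⟩
  · exact Or.inr ⟨e', rfl, h⟩

lemma edge_eq_of_mem_of_degree_eq_one [Fintype (G.neighborSet w)] (hw : G.degree w = 1)
    (hvw : G.Adj v w) {e : Sym2 V} (he : e ∈ G.edgeSet) (hwe : w ∈ e) : e = s(v, w) := by
  obtain ⟨z, rfl⟩ := Sym2.mem_iff_exists.mp hwe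
  rw [(degree_eq_one_iff_existsUnique_adj.mp hw).unique (G.mem_edgeSet.mp he) hvw.symm,
    Sym2.eq_swap]

lemma edge_eq_or_eq_of_mem_of_degree_eq_two [Fintype (G.neighborSet v)] (hv : G.degree v = 2)
    (huv : G.Adj u v) (hvw : G.Adj v w) (huw : u ≠ w) {e : Sym2 V} (he : e ∈ G.edgeSet)
    (hve : v ∈ e) : e = s(u, v) ∨ e = s(v, w) := by
  classical
  obtain ⟨z, rfl⟩ := Sym2.mem_iff_exists.mp hve
  have hsub : ({u, w} : Finset V) ⊆ G.neighborFinset v := by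
    simp [insert_subset_iff, huv.symm, hvw]
  have hneighbors := eq_of_subset_of_card_le hsub (by simp [card_pair huw, hv])
  have hz : z ∈ ({u, w} : Finset V) := hneighbors ▸ (mem_neighborFinset G v z).mpr he
  rcases (by simpa using hz : z = u ∨ z = w) with rfl | rfl
  · exact Or.inl Sym2.eq_swap
  · exact Or.inr rfl

lemma middleGraph_adj_inl_of_degree_eq_one [Fintype (G.neighborSet w)] (hw : G.degree w = 1)
    (hvw : G.Adj v w) {y : V ⊕ G.edgeSet} (h : (middleGraph G).Adj (Sum.inl w) y) :
    y = Sum.inr ⟨s(v, w), G.mem_edgeSet.mpr hvw⟩ := by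
  obtain ⟨e, rfl, hwe⟩ := middleGraph_adj_inl h
  exact congrArg Sum.inr (Subtype.ext (edge_eq_of_mem_of_degree_eq_one hw hvw e.2 hwe))

lemma middleGraph_adj_inl_of_degree_eq_two [Fintype (G.neighborSet v)] (hv : G.degree v = 2)
    (huv : G.Adj u v) (hvw : G.Adj v w) (huw : u ≠ w) {y : V ⊕ G.edgeSet}
    (h : (middleGraph G).Adj (Sum.inl v) y) :
    y = Sum.inr ⟨s(u, v), G.mem_edgeSet.mpr huv⟩ ∨
      y = Sum.inr ⟨s(v, w), G.mem_edgeSet.mpr hvw⟩ := by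
  obtain ⟨e, rfl, hve⟩ := middleGraph_adj_inl h
  rcases edge_eq_or_eq_of_mem_of_degree_eq_two hv huv hvw huw e.2 hve with he | he
  · exact Or.inl (congrArg Sum.inr (Subtype.ext he))
  · exact Or.inr (congrArg Sum.inr (Subtype.ext he))

lemma middleGraph_adj_inr_of_degree_eq_two_of_degree_eq_one [Fintype (G.neighborSet v)]
    [Fintype (G.neighborSet w)] (hv : G.degree v = 2) (hw : G.degree w = 1)
    (huv : G.Adj u v) (hvw : G.Adj v w) (huw : u ≠ w) {y : V ⊕ G.edgeSet}
    (h : (middleGraph G).Adj (Sum.inr ⟨s(v, w), G.mem_edgeSet.mpr hvw⟩) y) :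
    y = Sum.inl v ∨ y = Sum.inl w ∨ y = Sum.inr ⟨s(u, v), G.mem_edgeSet.mpr huv⟩ := by
  rcases middleGraph_adj_inr h with ⟨x, hx, rfl⟩ | ⟨e, rfl, hne, x, hx, hxe⟩
  · rcases Sym2.mem_iff.mp hx with rfl | rfl <;> simp
  rcases Sym2.mem_iff.mp hx with rfl | rfl
  · rcases edge_eq_or_eq_of_mem_of_degree_eq_two hv huv hvw huw e.2 hxe with he | he
    · exact Or.inr (Or.inr (congrArg Sum.inr (Subtype.ext he)))
    · exact absurd (Subtype.ext he.symm) hne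
  · exact absurd (Subtype.ext (edge_eq_of_mem_of_degree_eq_one hw hvw e.2 hxe).symm) hne

end SimpleGraph

open SimpleGraph

theorem stmt10_general {V : Type*} [Fintype V] (T : SimpleGraph V)
    [DecidableRel T.Adj] (u v w : V)
    (huv : T.Adj u v) (hvw : T.Adj v w) (huw : u ≠ w)
    (hdv : T.degree v = 2) (hdw : T.degree w = 1)
    (f : (V ⊕ T.edgeSet) → Finset (Fin 3)) (hf : IsRDF (middleGraph T) 3 f) :
    3 ≤ (f (Sum.inr ⟨s(u,v), T.mem_edgeSet.mpr huv⟩)).card + (f (Sum.inl v)).card +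
        (f (Sum.inr ⟨s(v,w), T.mem_edgeSet.mpr hvw⟩)).card + (f (Sum.inl w)).card := by
  classical
  set uv : T.edgeSet := ⟨s(u,v), T.mem_edgeSet.mpr huv⟩
  set vw : T.edgeSet := ⟨s(v,w), T.mem_edgeSet.mpr hvw⟩
  by_cases hfw : f (Sum.inl w) = ∅
  · have h3 := hf.le_sum_card_of_eq_empty hfw (S := {Sum.inr vw}) fun y hy =>
      mem_singleton.mpr (middleGraph_adj_inl_of_degree_eq_one hdw hvw hy)
    rw [sum_singleton] at h3
    omega
  by_cases hfv : f (Sum.inl v) = ∅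
  · have h3 := hf.le_sum_card_of_eq_empty hfv (S := {Sum.inr uv, Sum.inr vw}) fun y hy => by
      simpa using middleGraph_adj_inl_of_degree_eq_two hdv huv hvw huw hy
    rw [sum_pair (by simp [uv, vw, huw, huv.ne])] at h3
    omega
  by_cases hfvw : f (Sum.inr vw) = ∅
  · have h3 := hf.le_sum_card_of_eq_empty hfvw
      (S := {Sum.inl v, Sum.inl w, Sum.inr uv}) fun y hy => by
      simpa using middleGraph_adj_inr_of_degree_eq_two_of_degree_eq_one hdv hdw huv hvw huw hy
    rw [sum_insert (by simp [hvw.ne]), sum_pair (by simp)] at h3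
    omega
  have hcard_v := card_pos.mpr (nonempty_of_ne_empty hfv)
  have hcard_vw := card_pos.mpr (nonempty_of_ne_empty hfvw)
  have hcard_w := card_pos.mpr (nonempty_of_ne_empty hfw)
  omega

/-- For a path `uvw` in a tree `T` with `deg v = 2`, `deg w = 1`,
any minimum-weight middle 3-rainbow dominating function `f` satisfies
`|f(uv)| + |f(v)| + |f(vw)| + |f(w)| ≥ 3`. -/
theorem stmt10 {V : Type*} [Fintype V] [DecidableEq V] (T : SimpleGraph V)
    [DecidableRel T.Adj] (hT : T.IsTree) (u v w : V)
    (huv : T.Adj u v) (hvw : T.Adj v w) (huw : u ≠ w)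
    (hdv : T.degree v = 2) (hdw : T.degree w = 1)
    (f : (V ⊕ T.edgeSet) → Finset (Fin 3)) (hf : IsRDF (middleGraph T) 3 f)
    (hmin : rdfWeight f = mrdn T 3) :
    3 ≤ (f (Sum.inr ⟨s(u,v), T.mem_edgeSet.mpr huv⟩)).card + (f (Sum.inl v)).card +
        (f (Sum.inr ⟨s(v,w), T.mem_edgeSet.mpr hvw⟩)).card + (f (Sum.inl w)).card :=
  stmt10_general T u v w huv hvw huw hdv hdw f hf
end

section
/- For every even n ≥ 4, the 3-rainbow domatic number of the middle graph of the path P_n equals 4, i.e., d_{r3}(M(P_n)) = 4. -/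
open SimpleGraph Finset

/-!
Put the vertices of `M(P_n)` on a line, the vertex `j` at position `2j` and the edge `{j, j+1}`
at `2j + 1`. Two elements are adjacent exactly when their positions differ by one, or by two
and both are edges, so `M(P_n)` is the initial segment `[0, 2n - 1)` of a fixed graph on `ℕ`.
Four colourings periodic modulo `4` form a 3-rainbow dominating family there: one puts all three
colours on the positions `≡ 1`, and for each colour `c` one puts `c`, `c + 1`, `c + 2` on the
positions `≡ 0, 2, 3`. Every position then carries total weight exactly `3`; evenness of `n`
puts the last vertex at a position `≡ 2`, next to a full edge. Conversely, an end vertex of the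
path has a single neighbour in `M(P_n)`, which bounds any family by `3 + 1`.
-/

section RainbowDomatic

variable {W : Type*} {H : SimpleGraph W} {k : ℕ}

theorem IsRDF.eq_univ_of_forall_adj_eq {f : W → Finset (Fin k)} (hf : IsRDF H k f) {v u : W}
    (hvu : ∀ w, H.Adj v w → w = u) (hv : f v = ∅) : f u = univ :=
  eq_univ_of_forall fun c => by
    obtain ⟨w, hw, hc⟩ := hf v hv c
    rwa [← hvu w hw]

/-- A vertex whose only neighbour is `u` gets at least one colour from every function of the
family, unless `u` gets all `k` of them; counting both against the budget `k` gives `k + 1`. -/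
theorem card_le_succ_of_forall_adj_eq (hk : 0 < k) {v u : W} (hvu : ∀ w, H.Adj v w → w = u)
    {d : ℕ} {F : Fin d → W → Finset (Fin k)} (hF : ∀ i, IsRDF H k (F i))
    (hsum : ∀ w, ∑ i, (F i w).card ≤ k) : d ≤ k + 1 := by
  have hi : ∀ i, k ≤ k * (F i v).card + (F i u).card := by
    intro i
    by_cases hv : F i v = ∅
    · simp [(hF i).eq_univ_of_forall_adj_eq hvu hv]
    · have : 1 ≤ (F i v).card := card_pos.mpr (nonempty_iff_ne_empty.mpr hv)
      nlinarith
  refine Nat.le_of_mul_le_mul_left ?_ hk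
  calc k * d = ∑ _i : Fin d, k := by simp [mul_comm]
    _ ≤ ∑ i, (k * (F i v).card + (F i u).card) := sum_le_sum fun i _ => hi i
    _ = k * ∑ i, (F i v).card + ∑ i, (F i u).card := by rw [sum_add_distrib, mul_sum]
    _ ≤ k * k + k := by gcongr <;> exact hsum _
    _ = k * (k + 1) := by ring

theorem rdomatic_eq_succ_of_forall_adj_eq (hk : 0 < k) {v u : W}
    (hvu : ∀ w, H.Adj v w → w = u) (F : Fin (k + 1) → W → Finset (Fin k))
    (hinj : Function.Injective F) (hF : ∀ i, IsRDF H k (F i))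
    (hsum : ∀ w, ∑ i, (F i w).card ≤ k) : rdomatic H k = k + 1 := by
  have hbound : k + 1 ∈ upperBounds {d | ∃ F : Fin d → W → Finset (Fin k),
      Function.Injective F ∧ (∀ i, IsRDF H k (F i)) ∧ ∀ w, (∑ i, (F i w).card) ≤ k} :=
    fun _ ⟨_, _, hF, hsum⟩ => card_le_succ_of_forall_adj_eq hk hvu hF hsum
  exact le_antisymm (csSup_le' hbound) (le_csSup ⟨_, hbound⟩ ⟨F, hinj, hF, hsum⟩)

end RainbowDomatic

def triangleStrip : SimpleGraph ℕ :=
  SimpleGraph.fromRel fun a b => a + 1 = b ∨ (a % 2 = 1 ∧ a + 2 = b)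

theorem triangleStrip_adj {a b : ℕ} :
    triangleStrip.Adj a b ↔ a + 1 = b ∨ b + 1 = a ∨ (a % 2 = 1 ∧ (a + 2 = b ∨ b + 2 = a)) := by
  simp only [triangleStrip, fromRel_adj]
  omega

section PathMiddleGraph

variable {n : ℕ}

def pathEdge (j : ℕ) (hj : j + 1 < n) : (pathGraph n).edgeSet :=
  ⟨s(⟨j, by omega⟩, ⟨j + 1, hj⟩), pathGraph_adj.mpr (Or.inl rfl)⟩

theorem mem_pathEdge {j : ℕ} {hj : j + 1 < n} {v : Fin n} :
    v ∈ (pathEdge j hj : Sym2 (Fin n)) ↔ v.val = j ∨ v.val = j + 1 := by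
  simp [pathEdge, Fin.ext_iff]

theorem exists_eq_pathEdge (e : (pathGraph n).edgeSet) : ∃ j hj, e = pathEdge (n := n) j hj := by
  obtain ⟨e, he⟩ := e
  induction e using Sym2.ind with
  | _ a b =>
    rcases pathGraph_adj.mp he with h | h
    · exact ⟨a, h ▸ b.isLt, Subtype.ext <| by simp [pathEdge, h]⟩
    · exact ⟨b, h ▸ a.isLt, Subtype.ext <| by simp [pathEdge, h]⟩

def midPos : Fin n ⊕ (pathGraph n).edgeSet → ℕ
  | .inl v => 2 * v
  | .inr e => Sym2.lift ⟨fun a b : Fin n => (a : ℕ) + b, fun _ _ => add_comm _ _⟩ e.1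

@[simp] theorem midPos_inl (v : Fin n) : midPos (.inl v) = 2 * v := rfl

@[simp] theorem midPos_pathEdge (j : ℕ) (hj : j + 1 < n) :
    midPos (.inr (pathEdge j hj)) = 2 * j + 1 := by
  simp only [midPos, pathEdge, Sym2.lift_mk]; ring

theorem midPos_injective : Function.Injective (midPos (n := n)) := by
  rintro (v | e) (w | f) h
  · simp only [midPos_inl] at h; congr; omega
  all_goals
    try obtain ⟨j, hj, rfl⟩ := exists_eq_pathEdge e
    try obtain ⟨i, hi, rfl⟩ := exists_eq_pathEdge f
    simp only [midPos_inl, midPos_pathEdge] at h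
  · omega
  · omega
  · obtain rfl : j = i := by omega
    rfl

theorem pathEdge_inj {i j : ℕ} {hi : i + 1 < n} {hj : j + 1 < n} :
    pathEdge i hi = pathEdge j hj ↔ i = j := by
  refine ⟨fun h => ?_, fun h => by subst h; rfl⟩
  have := congrArg (midPos ∘ Sum.inr) h
  simp only [Function.comp_apply, midPos_pathEdge] at this
  omega

theorem middleGraph_pathGraph_adj_iff {x y : Fin n ⊕ (pathGraph n).edgeSet} :
    (middleGraph (pathGraph n)).Adj x y ↔ triangleStrip.Adj (midPos x) (midPos y) := by
  rcases x with v | e <;> rcases y with w | f <;>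
    try obtain ⟨j, hj, rfl⟩ := exists_eq_pathEdge e
  all_goals try obtain ⟨i, hi, rfl⟩ := exists_eq_pathEdge f
  all_goals simp only [middleGraph, ne_eq, triangleStrip_adj, midPos_inl, midPos_pathEdge,
    mem_pathEdge, pathEdge_inj, false_iff]
  case inr.inr =>
    exact ⟨fun ⟨hne, v, hvj, hvi⟩ => by omega,
      fun _ => ⟨by omega, ⟨max i j, by omega⟩, by dsimp only; omega⟩⟩
  all_goals omega

theorem midPos_lt (x : Fin n ⊕ (pathGraph n).edgeSet) : midPos x < 2 * n - 1 := by
  rcases x with v | e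
  · simp only [midPos_inl]; omega
  · obtain ⟨j, hj, rfl⟩ := exists_eq_pathEdge e
    simp only [midPos_pathEdge]; omega

theorem exists_midPos_eq {p : ℕ} (hp : p < 2 * n - 1) : ∃ x, midPos (n := n) x = p := by
  obtain ⟨j, rfl | rfl⟩ := Nat.even_or_odd' p
  · exact ⟨.inl ⟨j, by omega⟩, rfl⟩
  · exact ⟨.inr (pathEdge j (by omega)), midPos_pathEdge j _⟩

theorem eq_inr_pathEdge_zero_of_adj (hn : 1 < n) {x : Fin n ⊕ (pathGraph n).edgeSet}
    (hx : (middleGraph (pathGraph n)).Adj (.inl ⟨0, by omega⟩) x) :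
    x = .inr (pathEdge 0 hn) := by
  rw [middleGraph_pathGraph_adj_iff] at hx
  apply midPos_injective
  simp only [triangleStrip_adj, midPos_inl, midPos_pathEdge] at hx ⊢
  omega

end PathMiddleGraph

def IsStripRDF (N k : ℕ) (g : ℕ → Finset (Fin k)) : Prop :=
  ∀ p < N, g p = ∅ → ∀ c, ∃ q < N, triangleStrip.Adj p q ∧ c ∈ g q

theorem IsStripRDF.comp_midPos {n k : ℕ} {g : ℕ → Finset (Fin k)}
    (hg : IsStripRDF (2 * n - 1) k g) :
    IsRDF (middleGraph (pathGraph n)) k (g ∘ midPos) := by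
  intro x hx c
  obtain ⟨q, hq, hadj, hc⟩ := hg _ (midPos_lt x) hx c
  obtain ⟨y, rfl⟩ := exists_midPos_eq hq
  exact ⟨y, middleGraph_pathGraph_adj_iff.mpr hadj, hc⟩

def fullPattern (p : ℕ) : Finset (Fin 3) := if p % 4 = 1 then univ else ∅

def stripePattern (c : Fin 3) (p : ℕ) : Finset (Fin 3) :=
  if p % 4 = 0 then {c} else if p % 4 = 2 then {c + 1} else if p % 4 = 3 then {c + 2} else ∅

theorem fullPattern_eq_empty {p : ℕ} : fullPattern p = ∅ ↔ p % 4 ≠ 1 := by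
  by_cases h : p % 4 = 1 <;> simp [fullPattern, h, univ_nonempty.ne_empty]

theorem stripePattern_eq_empty {c : Fin 3} {p : ℕ} : stripePattern c p = ∅ ↔ p % 4 = 1 := by
  unfold stripePattern; split_ifs <;> simp <;> omega

theorem isStripRDF_fullPattern {n : ℕ} (hn : Even n) : IsStripRDF (2 * n - 1) 3 fullPattern := by
  intro p hp hpe c
  rw [fullPattern_eq_empty] at hpe
  obtain ⟨q, hq, hadj, hq1⟩ : ∃ q < 2 * n - 1, triangleStrip.Adj p q ∧ q % 4 = 1 := by
    obtain ⟨m, rfl⟩ := hn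
    have : p % 4 = 0 ∨ p % 4 = 2 ∨ p % 4 = 3 := by omega
    rcases this with h | h | h
    · exact ⟨p + 1, by omega, triangleStrip_adj.mpr (by omega), by omega⟩
    · exact ⟨p - 1, by omega, triangleStrip_adj.mpr (by omega), by omega⟩
    · exact ⟨p - 2, by omega, triangleStrip_adj.mpr (by omega), by omega⟩
  exact ⟨q, hq, hadj, by simp [fullPattern, hq1]⟩

theorem isStripRDF_stripePattern {n : ℕ} (hn : 3 ≤ n) (c : Fin 3) :
    IsStripRDF (2 * n - 1) 3 (stripePattern c) := by
  intro p hp hpe c'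
  rw [stripePattern_eq_empty] at hpe
  have hc' : c' = c ∨ c' = c + 1 ∨ c' = c + 2 := by revert c c'; decide
  rcases hc' with rfl | rfl | rfl
  · refine ⟨p - 1, by omega, triangleStrip_adj.mpr (by omega), ?_⟩
    simp [stripePattern, show (p - 1) % 4 = 0 by omega]
  · refine ⟨p + 1, by omega, triangleStrip_adj.mpr (by omega), ?_⟩
    simp [stripePattern, show (p + 1) % 4 = 2 by omega]
  · -- the odd positions `p ± 2` are the neighbouring edges; at least one exists since `n ≥ 3`
    obtain ⟨q, hq, hadj, hq3⟩ : ∃ q < 2 * n - 1, triangleStrip.Adj p q ∧ q % 4 = 3 := by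
      by_cases h : p + 2 < 2 * n - 1
      · exact ⟨p + 2, h, triangleStrip_adj.mpr (by omega), by omega⟩
      · exact ⟨p - 2, by omega, triangleStrip_adj.mpr (by omega), by omega⟩
    exact ⟨q, hq, hadj, by simp [stripePattern, hq3]⟩

def pathPattern : Fin 4 → ℕ → Finset (Fin 3) := Fin.cons fullPattern stripePattern

theorem pathPattern_injective_apply_zero : Function.Injective fun i => pathPattern i 0 := by
  decide

theorem sum_card_pathPattern (p : ℕ) : ∑ i, (pathPattern i p).card = 3 := by
  have : p % 4 = 0 ∨ p % 4 = 1 ∨ p % 4 = 2 ∨ p % 4 = 3 := by omega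
  rcases this with h | h | h | h <;>
    simp [pathPattern, Fin.sum_univ_succ, fullPattern, stripePattern, h]

theorem isStripRDF_pathPattern {n : ℕ} (hn : 3 ≤ n) (he : Even n) (i : Fin 4) :
    IsStripRDF (2 * n - 1) 3 (pathPattern i) :=
  Fin.cases (isStripRDF_fullPattern he) (isStripRDF_stripePattern hn) i

/-- For even `n ≥ 4`, `d_{r3}(M(P_n)) = 4`. -/
theorem stmt12 (n : ℕ) (hn : 4 ≤ n) (he : Even n) :
    rdomatic (middleGraph (pathGraph n)) 3 = 4 := by
  have hn1 : 1 < n := by omega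
  refine rdomatic_eq_succ_of_forall_adj_eq (by norm_num)
    (fun _ => eq_inr_pathEdge_zero_of_adj hn1) (fun i => pathPattern i ∘ midPos)
    (fun i j hij => pathPattern_injective_apply_zero (congrFun hij (.inl ⟨0, by omega⟩)))
    (fun i => (isStripRDF_pathPattern (by omega) he i).comp_midPos)
    (fun x => (sum_card_pathPattern (midPos x)).le)
end
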